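/- Let b ∈ ℝ^d, let a ∈ ℝ^d be k-sparse (‖a‖₀ ≤ k), and set k̄ = ‖a‖₀. Let b_k denote a vector obtained from b by keeping k entries of largest absolute value and setting all other entries to 0. Then ‖b_k − a‖ ≤ γ‖b − a‖, where γ = √(1 + (k̄/k + √((4 + k̄/k)·k̄/k))/2). -/

import Mathlib

noncomputable section

open Classical in
/-- number of nonzero entries (the "ℓ₀ norm") -/
def sparsity {d : ℕ} (v : EuclideanSpace ℝ (Fin d)) : ℕ :=
  (Finset.univ.filter fun i => v i ≠ 0).card

/-- `w` is a hard thresholding of `z`: keep `k` entries of largest magnitude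
(ties broken arbitrarily) and set all other entries to 0. -/
def IsHT {d : ℕ} (k : ℕ) (z w : EuclideanSpace ℝ (Fin d)) : Prop :=
  ∃ T : Finset (Fin d), T.card = k ∧ (∀ i, w i = if i ∈ T then z i else 0) ∧
    ∀ i ∈ T, ∀ j ∉ T, |z j| ≤ |z i|

/-- `γ = √(1 + (k̄/k + √((4 + k̄/k)·k̄/k))/2)` -/
def htGamma (k kbar : ℕ) : ℝ :=
  Real.sqrt (1 + ((kbar : ℝ) / k +
    Real.sqrt ((4 + (kbar : ℝ) / k) * ((kbar : ℝ) / k))) / 2)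

/-! With `e = b - a`, `T` the kept indices and `S ⊇ supp a`, one has
`‖b_k - a‖² = ‖e_T‖² + ‖a_{S∖T}‖²` and `‖b - a‖² ≥ ‖e_T‖² + ‖e_{S∖T}‖²`.
On `S ∖ T` write `a = b - e`; every entry of `b` there is dominated by every entry of `b` on
`T ∖ S`, where `b = e`, so a counting argument gives `‖b_{S∖T}‖² ≤ ρ ‖e_T‖²` with
`ρ = |S|/|T|`. Young's inequality with the weight `t`, the positive root of `t² = ρ(1 + t)`,
then yields `‖a_{S∖T}‖² ≤ (1 + t)‖e_{S∖T}‖² + t‖e_T‖²`, hence `‖b_k - a‖² ≤ (1 + t)‖b - a‖²`,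
and `γ = √(1 + t)`. -/

open Finset

/-- The positive root of `t² = ρ (1 + t)`. -/
def htRoot (ρ : ℝ) : ℝ :=
  (ρ + Real.sqrt ((4 + ρ) * ρ)) / 2

theorem htGamma_eq_sqrt_one_add_htRoot (k kbar : ℕ) :
    htGamma k kbar = Real.sqrt (1 + htRoot ((kbar : ℝ) / k)) :=
  rfl

theorem htRoot_nonneg {ρ : ℝ} (hρ : 0 ≤ ρ) : 0 ≤ htRoot ρ := by
  unfold htRoot
  positivity

theorem htRoot_pos {ρ : ℝ} (hρ : 0 < ρ) : 0 < htRoot ρ := by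
  unfold htRoot
  positivity

theorem htRoot_sq {ρ : ℝ} (hρ : 0 ≤ ρ) : htRoot ρ ^ 2 = ρ * (1 + htRoot ρ) := by
  have hsq : Real.sqrt ((4 + ρ) * ρ) ^ 2 = (4 + ρ) * ρ := Real.sq_sqrt (by positivity)
  unfold htRoot
  linear_combination hsq / 4

section

variable {ι : Type*}

/-- Weighted Young inequality `2uv ≤ t v² + u²/t`, summed and cleared of denominators. -/
theorem sum_sq_sub_le_of_sum_sq_le (s : Finset ι) {u v : ι → ℝ} {ρ t B : ℝ} (ht : 0 < t)
    (htρ : t ^ 2 = ρ * (1 + t)) (hu : ∑ i ∈ s, u i ^ 2 ≤ ρ * B) :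
    ∑ i ∈ s, (u i - v i) ^ 2 ≤ (1 + t) * ∑ i ∈ s, v i ^ 2 + t * B := by
  have hsum : t * ∑ i ∈ s, (u i - v i) ^ 2
      ≤ t * (1 + t) * ∑ i ∈ s, v i ^ 2 + (1 + t) * ∑ i ∈ s, u i ^ 2 := by
    simp only [mul_sum, ← sum_add_distrib]
    exact sum_le_sum fun i _ => by nlinarith [sq_nonneg (t * v i + u i)]
  have hρB : (1 + t) * ∑ i ∈ s, u i ^ 2 ≤ (1 + t) * (ρ * B) :=
    mul_le_mul_of_nonneg_left hu (by positivity)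
  refine le_of_mul_le_mul_left ?_ ht
  linear_combination hsum + hρB - B * htρ

theorem card_mul_sum_le_card_mul_sum {U V : Finset ι} {f : ι → ℝ}
    (h : ∀ i ∈ U, ∀ j ∈ V, f i ≤ f j) :
    (#V : ℝ) * ∑ i ∈ U, f i ≤ #U * ∑ j ∈ V, f j := by
  calc (#V : ℝ) * ∑ i ∈ U, f i = ∑ i ∈ U, ∑ _j ∈ V, f i := by
        simp only [sum_const, nsmul_eq_mul, mul_sum]
    _ ≤ ∑ _i ∈ U, ∑ j ∈ V, f j := sum_le_sum fun i hi => sum_le_sum fun j hj => h i hi j hj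
    _ = #U * ∑ j ∈ V, f j := by rw [sum_const, nsmul_eq_mul]

variable [DecidableEq ι]

theorem card_mul_card_sdiff_le {S T : Finset ι} (h : #S ≤ #T) :
    #T * #(S \ T) ≤ #S * #(T \ S) := by
  have hS := card_sdiff_add_card_inter S T
  have hT := card_sdiff_add_card_inter T S
  rw [inter_comm] at hT
  nlinarith

theorem card_mul_sum_sq_sdiff_le {S T : Finset ι} {b : ι → ℝ} (hST : #S ≤ #T)
    (hT : ∀ i ∈ T, ∀ j ∉ T, |b j| ≤ |b i|) :
    (#T : ℝ) * ∑ i ∈ S \ T, b i ^ 2 ≤ #S * ∑ i ∈ T \ S, b i ^ 2 := by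
  rcases (T \ S).eq_empty_or_nonempty with hV | hV
  · obtain rfl : S = T := (eq_of_subset_of_card_le (sdiff_eq_empty_iff_subset.mp hV) hST).symm
    simp
  have hdom : #(T \ S) * ∑ i ∈ S \ T, b i ^ 2 ≤ #(S \ T) * ∑ i ∈ T \ S, b i ^ 2 :=
    card_mul_sum_le_card_mul_sum fun j hj i hi =>
      sq_le_sq.mpr (hT i (mem_sdiff.mp hi).1 j (mem_sdiff.mp hj).2)
  have hcard : (#T * #(S \ T) : ℝ) ≤ #S * #(T \ S) := by
    exact_mod_cast card_mul_card_sdiff_le hST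
  have hB : 0 ≤ ∑ i ∈ T \ S, b i ^ 2 := sum_nonneg fun i _ => sq_nonneg _
  refine le_of_mul_le_mul_left ?_ (show (0 : ℝ) < #(T \ S) by exact_mod_cast hV.card_pos)
  nlinarith

variable [Fintype ι]

theorem sum_sq_threshold_sub_eq {S T : Finset ι} {a b w : ι → ℝ} (ha : ∀ i ∉ S, a i = 0)
    (hw : ∀ i, w i = if i ∈ T then b i else 0) :
    ∑ i, (w i - a i) ^ 2 = ∑ i ∈ T, (b i - a i) ^ 2 + ∑ i ∈ S \ T, a i ^ 2 := by
  rw [← sum_add_sum_compl T]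
  congr 1
  · exact sum_congr rfl fun i hi => by rw [hw, if_pos hi]
  · rw [sum_congr rfl fun i hi => by rw [hw, if_neg (mem_compl.mp hi), zero_sub, neg_sq]]
    refine (sum_subset (fun i hi => mem_compl.mpr (mem_sdiff.mp hi).2) fun i hi hiS => ?_).symm
    rw [ha i fun h => hiS (mem_sdiff.mpr ⟨h, mem_compl.mp hi⟩), sq, zero_mul]

theorem sum_sq_threshold_sub_le {S T : Finset ι} {a b w : ι → ℝ} (ha : ∀ i ∉ S, a i = 0)
    (hST : #S ≤ #T) (hw : ∀ i, w i = if i ∈ T then b i else 0)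
    (hT : ∀ i ∈ T, ∀ j ∉ T, |b j| ≤ |b i|) :
    ∑ i, (w i - a i) ^ 2 ≤ (1 + htRoot (#S / #T)) * ∑ i, (b i - a i) ^ 2 := by
  set t := htRoot (#S / #T)
  have ht : 0 ≤ t := htRoot_nonneg (by positivity)
  have hpart : ∑ i ∈ T, (b i - a i) ^ 2 + ∑ i ∈ S \ T, (b i - a i) ^ 2
      ≤ ∑ i, (b i - a i) ^ 2 := by
    rw [← sum_union disjoint_sdiff]
    exact sum_le_univ_sum_of_nonneg fun i => sq_nonneg _
  have hmissed : ∑ i ∈ S \ T, a i ^ 2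
      ≤ (1 + t) * ∑ i ∈ S \ T, (b i - a i) ^ 2 + t * ∑ i ∈ T, (b i - a i) ^ 2 := by
    rcases (S \ T).eq_empty_or_nonempty with hU | hU
    · rw [hU, sum_empty, sum_empty]
      have : 0 ≤ ∑ i ∈ T, (b i - a i) ^ 2 := sum_nonneg fun i _ => sq_nonneg _
      positivity
    have hSpos : (0 : ℝ) < #S := by exact_mod_cast (hU.mono sdiff_subset).card_pos
    have hTpos : (0 : ℝ) < #T := hSpos.trans_le (by exact_mod_cast hST)
    have hρ : (0 : ℝ) < #S / #T := div_pos hSpos hTpos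
    have hkept : ∑ i ∈ T \ S, b i ^ 2 ≤ ∑ i ∈ T, (b i - a i) ^ 2 :=
      calc ∑ i ∈ T \ S, b i ^ 2 = ∑ i ∈ T \ S, (b i - a i) ^ 2 :=
            sum_congr rfl fun i hi => by rw [ha i (mem_sdiff.mp hi).2, sub_zero]
        _ ≤ ∑ i ∈ T, (b i - a i) ^ 2 :=
            sum_le_sum_of_subset_of_nonneg sdiff_subset fun i _ _ => sq_nonneg _
    have hdropped : ∑ i ∈ S \ T, b i ^ 2 ≤ #S / #T * ∑ i ∈ T \ S, b i ^ 2 := by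
      rw [div_mul_eq_mul_div, le_div_iff₀ hTpos, mul_comm]
      exact card_mul_sum_sq_sdiff_le hST hT
    have hyoung := sum_sq_sub_le_of_sum_sq_le (S \ T) (v := fun i => b i - a i)
      (htRoot_pos hρ) (htRoot_sq hρ.le) hdropped
    simp only [sub_sub_cancel] at hyoung
    linarith [mul_le_mul_of_nonneg_left hkept ht]
  rw [sum_sq_threshold_sub_eq ha hw]
  linarith [mul_le_mul_of_nonneg_left hpart (show (0 : ℝ) ≤ 1 + t by positivity)]

end

/-- Simplified expansivity bound for the hard-thresholding operator: for a `k`-sparse `a`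
with `k̄ = ‖a‖₀`, any hard thresholding `b_k` of `b` satisfies `‖b_k − a‖ ≤ γ‖b − a‖`
where `γ = √(1 + (k̄/k + √((4 + k̄/k)·k̄/k))/2)`. -/
theorem hard_thresholding_expansivity_simple {d : ℕ} (k : ℕ)
    (b a bk : EuclideanSpace ℝ (Fin d))
    (ha : sparsity a ≤ k) (hbk : IsHT k b bk) :
    ‖bk - a‖ ≤ htGamma k (sparsity a) * ‖b - a‖ := by
  obtain ⟨T, rfl, hbk, hT⟩ := hbk
  obtain ⟨S, hS, hsupp⟩ : ∃ S : Finset (Fin d), #S = sparsity a ∧ ∀ i ∉ S, a i = 0 :=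
    ⟨_, rfl, fun i hi => by simpa using hi⟩
  rw [htGamma_eq_sqrt_one_add_htRoot, ← hS]
  have hsq : ‖bk - a‖ ^ 2 ≤ (1 + htRoot (#S / #T)) * ‖b - a‖ ^ 2 := by
    simpa only [EuclideanSpace.norm_sq_eq, PiLp.sub_apply, Real.norm_eq_abs, sq_abs]
      using sum_sq_threshold_sub_le hsupp (hS ▸ ha) hbk hT
  calc ‖bk - a‖ = √(‖bk - a‖ ^ 2) := (Real.sqrt_sq (norm_nonneg _)).symm
    _ ≤ √((1 + htRoot (#S / #T)) * ‖b - a‖ ^ 2) := Real.sqrt_le_sqrt hsq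
    _ = √(1 + htRoot (#S / #T)) * ‖b - a‖ := by
      rw [Real.sqrt_mul' _ (sq_nonneg _), Real.sqrt_sq (norm_nonneg _)]
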